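/- Let n ≥ 1 be an integer and ψ ∈ ℂ² any vector. Then (1/2) Σ_{α=0}^{3} ⟨ψ, σ_α ψ⟩^{2n} = ⟨Ψ, Λ^{(n)} Ψ⟩, where Ψ = (ψ ⊗ ψ̄)^{⊗n} ∈ (ℂ²)^{⊗2n} with ψ̄ the entrywise complex conjugate of ψ, and ⟨·,·⟩ is the standard Hermitian inner product (note each ⟨ψ, σ_α ψ⟩ is real since σ_α is Hermitian). -/

import Mathlib

/-! Both `Ψ` and each summand `(σ_α ⊗ σ̄_α)^{⊗n}` of `Λ^{(n)}` are `n`-fold tensor powers over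
pairs of qubits, so the quadratic form factorises into the single-pair forms
`⟨ψ ⊗ ψ̄, (σ_α ⊗ σ̄_α)(ψ ⊗ ψ̄)⟩ = ⟨ψ, σ_α ψ⟩ · conj ⟨ψ, σ_α ψ⟩`, and the latter is `⟨ψ, σ_α ψ⟩²`
because `σ_α` is Hermitian. -/

open scoped Matrix ComplexConjugate

noncomputable section

/-- The four Pauli matrices: `σ 0 = 1`, `σ 1 = σ_x`, `σ 2 = σ_y`, `σ 3 = σ_z`. -/
def σ (α : Fin 4) : Matrix (Fin 2) (Fin 2) ℂ :=
  if α = 0 then 1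
  else if α = 1 then !![0, 1; 1, 0]
  else if α = 2 then !![0, -Complex.I; Complex.I, 0]
  else !![1, 0; 0, -1]

/-- `Λ^{(n)} = (1/2) Σ_{α=0}^{3} (σ_α ⊗ σ̄_α)^{⊗n}`, an operator on `(ℂ²)^{⊗2n}`:
the `k`-th tensor factor of `σ_α ⊗ σ̄_α` sits on qubits `2k` and `2k+1`. -/
def Lambda (n : ℕ) : Matrix (Fin (2*n) → Fin 2) (Fin (2*n) → Fin 2) ℂ :=
  fun s t => ((1:ℂ)/2) * ∑ α : Fin 4, ∏ k : Fin n,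
    σ α (s ⟨2*k.val, by have := k.isLt; omega⟩) (t ⟨2*k.val, by have := k.isLt; omega⟩) *
    conj (σ α (s ⟨2*k.val+1, by have := k.isLt; omega⟩) (t ⟨2*k.val+1, by have := k.isLt; omega⟩))

/-- The replica vector `Ψ = (ψ ⊗ ψ̄)^{⊗n} ∈ (ℂ²)^{⊗2n}`: qubit `2k` carries `ψ` and
qubit `2k+1` carries its entrywise complex conjugate `ψ̄`. -/
def replicaVec (n : ℕ) (ψ : Fin 2 → ℂ) : (Fin (2*n) → Fin 2) → ℂ :=
  fun s => ∏ k : Fin n,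
    ψ (s ⟨2*k.val, by have := k.isLt; omega⟩) *
    conj (ψ (s ⟨2*k.val+1, by have := k.isLt; omega⟩))

open Matrix Kronecker

section TensorPower

variable {R P X : Type*} [Fintype P] [Fintype X] {n : ℕ}

theorem sum_sum_prod_equiv_pi [CommSemiring R] (e : X ≃ (Fin n → P)) (f : P → P → R) :
    ∑ s, ∑ t, ∏ k, f (e s k) (e t k) = (∑ p, ∑ q, f p q) ^ n := by
  calc ∑ s, ∑ t, ∏ k, f (e s k) (e t k)
      = ∑ g : (Fin n → P) × (Fin n → P), ∏ k, f (g.1 k) (g.2 k) := by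
        rw [← (e.prodCongr e).sum_comp, Fintype.sum_prod_type]; rfl
    _ = ∑ g : Fin n → P × P, ∏ k, f (g k).1 (g k).2 :=
        ((Equiv.arrowProdEquivProdArrow (Fin n) (fun _ => P) (fun _ => P)).sum_comp _).symm
    _ = (∑ p, ∑ q, f p q) ^ n := by rw [← Fintype.sum_prod_type', Fintype.sum_pow]

variable [CommRing R] [StarRing R]

def tensorPowVec (e : X ≃ (Fin n → P)) (v : P → R) : X → R :=
  fun s => ∏ k, v (e s k)

def tensorPowMatrix (e : X ≃ (Fin n → P)) (A : Matrix P P R) : Matrix X X R :=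
  of fun s t => ∏ k, A (e s k) (e t k)

theorem star_dotProduct_tensorPow_mulVec (e : X ≃ (Fin n → P)) (v : P → R) (A : Matrix P P R) :
    star (tensorPowVec e v) ⬝ᵥ tensorPowMatrix e A *ᵥ tensorPowVec e v =
      (star v ⬝ᵥ A *ᵥ v) ^ n := by
  simp only [dotProduct, mulVec, tensorPowVec, tensorPowMatrix, of_apply, Pi.star_apply, star_prod,
    Finset.mul_sum, ← Finset.prod_mul_distrib]
  exact sum_sum_prod_equiv_pi e fun p q => star (v p) * (A p q * v q)

end TensorPower

section Kronecker

variable {R P : Type*} [CommRing R] [StarRing R] [Fintype P]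

def tensorConj (ψ : P → R) : P × P → R :=
  fun p => ψ p.1 * star (ψ p.2)

theorem star_dotProduct_kronecker_map_star_mulVec (ψ : P → R) (A : Matrix P P R) :
    star (tensorConj ψ) ⬝ᵥ (A ⊗ₖ A.map star) *ᵥ tensorConj ψ =
      (star ψ ⬝ᵥ A *ᵥ ψ) * star (star ψ ⬝ᵥ A *ᵥ ψ) := by
  have expectation_eq_sum : star ψ ⬝ᵥ A *ᵥ ψ = ∑ x : P × P, star (ψ x.1) * A x.1 x.2 * ψ x.2 := by
    simp only [dotProduct, mulVec, Finset.mul_sum, Fintype.sum_prod_type, Pi.star_apply, mul_assoc]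
  rw [expectation_eq_sum, star_sum, Finset.sum_mul_sum, ← Fintype.sum_prod_type',
    ← (Equiv.prodProdProdComm P P P P).sum_comp]
  simp only [dotProduct, mulVec, Finset.mul_sum, ← Fintype.sum_prod_type']
  refine Fintype.sum_congr _ _ fun x => ?_
  simp only [tensorConj, Pi.star_apply, kroneckerMap_apply, map_apply, star_mul, star_star,
    Equiv.prodProdProdComm_apply]
  ring

end Kronecker

theorem isHermitian_σ (α : Fin 4) : (σ α).IsHermitian := by
  fin_cases α <;> ext i j <;> fin_cases i <;> fin_cases j <;> simp [σ]

def qubitPairs (n : ℕ) : (Fin (2 * n) → Fin 2) ≃ (Fin n → Fin 2 × Fin 2) :=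
  (((finCongr (Nat.mul_comm 2 n)).trans finProdFinEquiv.symm).arrowCongr (Equiv.refl _)).trans
    ((Equiv.curry _ _ _).trans ((Equiv.refl _).arrowCongr (finTwoArrowEquiv _)))

theorem qubitPairs_apply (n : ℕ) (s : Fin (2 * n) → Fin 2) (k : Fin n) :
    qubitPairs n s k = (s ⟨2 * k, by omega⟩, s ⟨2 * k + 1, by omega⟩) := by
  simp [qubitPairs, finProdFinEquiv, add_comm]

theorem replicaVec_eq_tensorPowVec (n : ℕ) (ψ : Fin 2 → ℂ) :
    replicaVec n ψ = tensorPowVec (qubitPairs n) (tensorConj ψ) := by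
  ext s
  simp [replicaVec, tensorPowVec, tensorConj, qubitPairs_apply]

theorem Lambda_eq_smul_sum_tensorPowMatrix (n : ℕ) :
    Lambda n = (1 / 2 : ℂ) • ∑ α, tensorPowMatrix (qubitPairs n) (σ α ⊗ₖ (σ α).map star) := by
  ext s t
  simp [Lambda, tensorPowMatrix, qubitPairs_apply, Matrix.sum_apply]

theorem lambda_single_qubit_moments_general (n : ℕ) (ψ : Fin 2 → ℂ) :
    ((1:ℂ)/2) * ∑ α : Fin 4, (star ψ ⬝ᵥ (σ α *ᵥ ψ))^(2*n) =
      star (replicaVec n ψ) ⬝ᵥ (Lambda n *ᵥ replicaVec n ψ) := by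
  have real_expectation (α : Fin 4) : star (star ψ ⬝ᵥ σ α *ᵥ ψ) = star ψ ⬝ᵥ σ α *ᵥ ψ :=
    RCLike.conj_eq_iff_im.mpr ((isHermitian_σ α).im_star_dotProduct_mulVec_self ψ)
  rw [replicaVec_eq_tensorPowVec, Lambda_eq_smul_sum_tensorPowMatrix, smul_mulVec, sum_mulVec,
    dotProduct_smul, dotProduct_sum]
  simp only [star_dotProduct_tensorPow_mulVec, star_dotProduct_kronecker_map_star_mulVec,
    real_expectation, pow_mul, sq, smul_eq_mul]

/-- `(1/2) Σ_{α=0}^{3} ⟨ψ, σ_α ψ⟩^{2n} = ⟨Ψ, Λ^{(n)} Ψ⟩` with `Ψ = (ψ ⊗ ψ̄)^{⊗n}`. -/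
theorem lambda_single_qubit_moments (n : ℕ) (hn : 1 ≤ n) (ψ : Fin 2 → ℂ) :
    ((1:ℂ)/2) * ∑ α : Fin 4, (star ψ ⬝ᵥ (σ α *ᵥ ψ))^(2*n) =
      star (replicaVec n ψ) ⬝ᵥ (Lambda n *ᵥ replicaVec n ψ) :=
  lambda_single_qubit_moments_general n ψ
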